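/- arXiv:1006.2636 — 7 statements merged into one kernel-verified Lean document; each statement's English description precedes it below -/
import Mathlib

section
/- Let V be a finite-dimensional real inner product space with compatible complex structure J, and let ξ : V → End(V) be a nearly-Kähler-type torsion: ξ_X is skew-symmetric, ξ_X X = 0, and ξ_X J = -J ξ_X for all X. Let C be a symmetric endomorphism commuting with J and satisfying C ξ_X Y = ξ_X C Y (parallelism) together with the first-Chern-class identity C ξ_X Y + ξ_X C Y + ξ_{CX} Y = 0 for all X,Y. If the structure is strict (for each X ≠ 0 there exists Y with ξ_X Y ≠ 0, and moreover for each X there is Y with ξ_X² Y = -c² Y for some c ≠ 0), then C = 0. -/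
open scoped RealInnerProductSpace

/-- Linear-algebraic content of "`∇C = 0` implies `C = 0`" on a
strict nearly Kähler manifold. `V` is a finite-dimensional real inner product
space with compatible complex structure `J`, `ξ` is a nearly-Kähler-type
torsion (skew-symmetric, `ξ_X X = 0`, anticommuting with `J`), and `C` is a
symmetric endomorphism commuting with `J`, parallel (`C ξ_X Y = ξ_X C Y`) and
satisfying the first-Chern-class identity
`C ξ_X Y + ξ_X C Y + ξ_{CX} Y = 0`.  Strictness: for each `X ≠ 0` there is `Y`
with `ξ_X Y ≠ 0` and moreover some `Y` with `ξ_X² Y = -c² Y`, `c ≠ 0`.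
Then `C = 0`. -/
theorem stmt2
    {V : Type*} [NormedAddCommGroup V] [InnerProductSpace ℝ V]
    [FiniteDimensional ℝ V]
    (J : V →ₗ[ℝ] V)
    (hJ2 : ∀ x, J (J x) = -x)
    (hJg : ∀ x y, ⟪J x, J y⟫ = ⟪x, y⟫)
    (ξ : V →ₗ[ℝ] V →ₗ[ℝ] V)
    (hξskew : ∀ X Y Z, ⟪ξ X Y, Z⟫ = -⟪Y, ξ X Z⟫)
    (hξXX : ∀ X, ξ X X = 0)
    (hξJ : ∀ X Y, ξ X (J Y) + J (ξ X Y) = 0)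
    (C : V →ₗ[ℝ] V)
    (hCsym : ∀ x y, ⟪C x, y⟫ = ⟪x, C y⟫)
    (hCJ : ∀ x, C (J x) = J (C x))
    (hCpar : ∀ X Y, C (ξ X Y) = ξ X (C Y))
    (hChern : ∀ X Y, C (ξ X Y) + ξ X (C Y) + ξ (C X) Y = 0)
    (hstrict : ∀ X : V, X ≠ 0 → ∃ Y, ξ X Y ≠ 0)
    (hstrict' : ∀ X : V, X ≠ 0 → ∃ Y, ∃ c : ℝ, c ≠ 0 ∧ ξ X (ξ X Y) = -(c ^ 2) • Y) :
    C = 0 := by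
  have hanti : ∀ X Y : V, ξ X Y = -ξ Y X := by
    intro X Y
    have h := hξXX (X + Y)
    simp only [map_add, LinearMap.add_apply, hξXX, zero_add, add_zero] at h
    exact eq_neg_of_add_eq_zero_right h
  have hA : ∀ X Y : V, ξ (C X) Y = (-2 : ℝ) • ξ X (C Y) := by
    intro X Y
    have h := hChern X Y
    rw [hCpar] at h
    have h' : ξ (C X) Y = -(ξ X (C Y) + ξ X (C Y)) := by
      rw [eq_neg_iff_add_eq_zero]
      calc ξ (C X) Y + (ξ X (C Y) + ξ X (C Y))
          = ξ X (C Y) + ξ X (C Y) + ξ (C X) Y := by abel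
        _ = 0 := h
    rw [h']; module
  have hzero : ∀ X Y : V, ξ X (C Y) = 0 := by
    intro X Y
    have key : (-2 : ℝ) • ξ X (C Y) = (-2⁻¹ : ℝ) • ξ X (C Y) := by
      calc (-2 : ℝ) • ξ X (C Y) = ξ (C X) Y := (hA X Y).symm
        _ = -ξ Y (C X) := hanti _ _
        _ = -((-2⁻¹ : ℝ) • ξ (C Y) X) := by rw [hA Y X]; module
        _ = -((-2⁻¹ : ℝ) • (-ξ X (C Y))) := by rw [hanti (C Y) X]
        _ = (-2⁻¹ : ℝ) • ξ X (C Y) := by module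
    have h0 : ((-2 : ℝ) - (-2⁻¹ : ℝ)) • ξ X (C Y) = 0 := by
      rw [sub_smul, key, sub_self]
    rcases smul_eq_zero.mp h0 with h | h
    · norm_num at h
    · exact h
  ext Y
  simp only [LinearMap.zero_apply]
  by_contra hne
  obtain ⟨Z, hZ⟩ := hstrict (C Y) hne
  apply hZ
  rw [hanti, hzero, neg_zero]
end

section
/- On a strict nearly Kähler manifold, if the tensor r = Ric - Ric* has exactly one eigenvalue λ, then λ > 0 and the manifold is Einstein with Ric = (5/4) r = (5λ/4) g; moreover C = Ric - 5Ric* = 0. -/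
open scoped RealInnerProductSpace

lemma trace_inner {V : Type*} [NormedAddCommGroup V] [InnerProductSpace ℝ V]
    [FiniteDimensional ℝ V] {n : ℕ} (e : OrthonormalBasis (Fin n) ℝ V)
    (f : V →ₗ[ℝ] V) :
    LinearMap.trace ℝ V f = ∑ i, ⟪e i, f (e i)⟫ := by
  rw [LinearMap.trace_eq_matrix_trace ℝ e.toBasis f, Matrix.trace]
  simp only [Matrix.diag, LinearMap.toMatrix_apply, e.coe_toBasis,
    e.coe_toBasis_repr_apply, e.repr_apply_apply]

/-- Fiberwise formulation on a strict nearly Kähler manifold: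
with `Ric(X,Y) = Σ_i ⟨R_{X,e_i} Y, e_i⟩`, `Ric*(X,Y) = Σ_i ⟨R_{X,e_i} JY, Je_i⟩`,
`r = Ric - Ric*` (which equals `-4 trace (ξ_X ∘ ξ_Y)` and is positive definite
by strictness) and `C = Ric - 5 Ric*`, and the nearly Kähler curvature identity
`Σ_{i,j} r(e_i,e_j) (⟨R_{X e_i} Y, e_j⟩ - 5⟨R_{X e_i} JY, J e_j⟩) = 0`:
if `r` has exactly one eigenvalue `λ`, i.e. `r = λ g`, then `λ > 0`, `C = 0`,
and the manifold is Einstein with `Ric = (5/4) r = (5λ/4) g`. -/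
theorem stmt3
    {V : Type*} [NormedAddCommGroup V] [InnerProductSpace ℝ V]
    [FiniteDimensional ℝ V] {n : ℕ}
    (e : OrthonormalBasis (Fin n) ℝ V)
    (J : V →ₗ[ℝ] V)
    (hJ2 : ∀ x, J (J x) = -x)
    (hJg : ∀ x y, ⟪J x, J y⟫ = ⟪x, y⟫)
    (R : V → V → V → V)
    (Ric RicStar r C : V → V → ℝ)
    (hRic : ∀ X Y, Ric X Y = ∑ i, ⟪R X (e i) Y, e i⟫)
    (hRicStar : ∀ X Y, RicStar X Y = ∑ i, ⟪R X (e i) (J Y), J (e i)⟫)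
    (hrdef : ∀ X Y, r X Y = Ric X Y - RicStar X Y)
    (hCdef : ∀ X Y, C X Y = Ric X Y - 5 * RicStar X Y)
    -- `r(X,Y) = -4 trace (ξ_X ∘ ξ_Y)` with `ξ` the intrinsic torsion,
    -- totally skew-symmetric and strict:
    (ξ : V →ₗ[ℝ] V →ₗ[ℝ] V)
    (hξskew : ∀ X Y Z, ⟪ξ X Y, Z⟫ = -⟪Y, ξ X Z⟫)
    (hξXX : ∀ X, ξ X X = 0)
    (hrξ : ∀ X Y, r X Y = -4 * LinearMap.trace ℝ V (ξ X ∘ₗ ξ Y))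
    (hstrict : ∀ u : V, u ≠ 0 → ξ u ≠ 0)
    -- the curvature identity (formula (rr) of the paper):
    (hrr : ∀ X Y, ∑ i, ∑ j,
        r (e i) (e j) * (⟪R X (e i) Y, e j⟫ - 5 * ⟪R X (e i) (J Y), J (e j)⟫) = 0)
    -- `r` has exactly one eigenvalue `lam`:
    (lam : ℝ)
    (hsingle : ∀ X Y, r X Y = lam * ⟪X, Y⟫)
    (hpos : 0 < n) :
    0 < lam ∧
    (∀ X Y, C X Y = 0) ∧
    (∀ X Y, Ric X Y = (5 / 4) * r X Y) ∧
    (∀ X Y, Ric X Y = (5 * lam / 4) * ⟪X, Y⟫) := by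
  -- λ > 0
  have i0 : Fin n := ⟨0, hpos⟩
  set u := e i0 with hu
  have hu0 : u ≠ 0 := by
    intro h
    have := e.orthonormal.1 i0
    rw [← hu, h] at this; simp at this
  have hξu : ξ u ≠ 0 := hstrict u hu0
  -- trace of ξ_u ∘ ξ_u is -Σ ‖ξ_u e_i‖²
  have htr : LinearMap.trace ℝ V (ξ u ∘ₗ ξ u) = -∑ i, ⟪ξ u (e i), ξ u (e i)⟫ := by
    rw [trace_inner e]
    rw [← Finset.sum_neg_distrib]
    apply Finset.sum_congr rfl
    intro i _
    rw [LinearMap.comp_apply, real_inner_comm, hξskew]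
  have hux : ∃ i, ξ u (e i) ≠ 0 := by
    by_contra h
    push_neg at h
    apply hξu
    apply e.toBasis.ext
    intro i
    simpa using h i
  have hsumpos : 0 < ∑ i, ⟪ξ u (e i), ξ u (e i)⟫ := by
    obtain ⟨i, hi⟩ := hux
    have : ∀ j ∈ Finset.univ, (0:ℝ) ≤ ⟪ξ u (e j), ξ u (e j)⟫ :=
      fun j _ => real_inner_self_nonneg
    refine Finset.sum_pos' this ⟨i, Finset.mem_univ i, ?_⟩
    have hn : 0 < ‖ξ u (e i)‖ := norm_pos_iff.2 hi
    rw [real_inner_self_eq_norm_sq]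
    positivity
  have hlam : 0 < lam := by
    have h1 : r u u = lam := by
      rw [hsingle]
      have := e.orthonormal.1 i0
      rw [← hu] at this
      rw [real_inner_self_eq_norm_sq, this]; ring
    have h2 : r u u = 4 * ∑ i, ⟪ξ u (e i), ξ u (e i)⟫ := by
      rw [hrξ, htr]; ring
    rw [h1] at h2
    rw [h2]; positivity
  -- C = 0
  have hC : ∀ X Y, C X Y = 0 := by
    intro X Y
    have h := hrr X Y
    have : ∀ i j, r (e i) (e j) * (⟪R X (e i) Y, e j⟫ - 5 * ⟪R X (e i) (J Y), J (e j)⟫)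
        = lam * (⟪e i, e j⟫ * (⟪R X (e i) Y, e j⟫ - 5 * ⟪R X (e i) (J Y), J (e j)⟫)) := by
      intro i j; rw [hsingle]; ring
    simp_rw [this, ← Finset.mul_sum] at h
    have h2 : ∑ i, ∑ j, ⟪e i, e j⟫ * (⟪R X (e i) Y, e j⟫ - 5 * ⟪R X (e i) (J Y), J (e j)⟫)
        = C X Y := by
      rw [hCdef, hRic, hRicStar, Finset.mul_sum, ← Finset.sum_sub_distrib]
      apply Finset.sum_congr rfl
      intro i _
      rw [Finset.sum_eq_single i]
      · have := e.orthonormal.1 i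
        rw [real_inner_self_eq_norm_sq, this]; ring
      · intro j _ hj
        rw [e.orthonormal.2 (Ne.symm hj)]; ring
      · intro h; exact absurd (Finset.mem_univ i) h
    rw [h2] at h
    exact (mul_eq_zero.1 h).resolve_left (ne_of_gt hlam)
  -- Ric = 5 Ric*, hence Ric = (5/4) r
  have hRr : ∀ X Y, Ric X Y = (5 / 4) * r X Y := by
    intro X Y
    have h1 := hC X Y
    rw [hCdef] at h1
    have h2 := hrdef X Y
    -- Ric = 5 RicStar, r = Ric - RicStar = (4/5) Ric
    nlinarith [h1, h2]
  refine ⟨hlam, hC, hRr, fun X Y => ?_⟩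
  rw [hRr, hsingle]; ring
end

section
/- Let (M,g,J) be a nearly Kähler manifold with special algebraic torsion, with ∇^{U(n)}-parallel J-stable splitting TM = V ⊕ H, ξ_V V = 0, ξ_H H ⊆ V. If there is a further ∇^{U(n)}-parallel J-stable orthogonal splitting H = E ⊕ F with ξ_E E = ξ_F F = 0, then ξ_E F ⊆ V, ξ_V E ⊆ F and ξ_V F ⊆ E, provided V, E, F are eigenbundles of the parallel tensor C with eigenvalues λ, λ₁, λ₂ satisfying λ₁ + λ₂ = -λ and λ₁ ≠ λ₂. -/
open scoped RealInnerProductSpace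

/-- Auxiliary: if `W = V ⊔ (E ⊔ F)`, the tensor `C` acts with eigenvalues
`μ, μ₁, μ₂` on `V, E, F`, `μ₁ ≠ μ₂`, and `w` is orthogonal to `V` and is a
`C`-eigenvector with eigenvalue `μ₂`, then `w ∈ F`. -/
lemma stmt4_aux
    {W : Type*} [NormedAddCommGroup W] [InnerProductSpace ℝ W]
    (V E F : Submodule ℝ W)
    (hsplit : V ⊔ (E ⊔ F) = ⊤)
    (hVE : ∀ v ∈ V, ∀ x ∈ E, ⟪v, x⟫ = 0)
    (hVF : ∀ v ∈ V, ∀ y ∈ F, ⟪v, y⟫ = 0)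
    (C : W →ₗ[ℝ] W) (μ μ₁ μ₂ : ℝ)
    (hCV : ∀ v ∈ V, C v = μ • v)
    (hCE : ∀ x ∈ E, C x = μ₁ • x)
    (hCF : ∀ y ∈ F, C y = μ₂ • y)
    (hne : μ₁ ≠ μ₂)
    (w : W)
    (horth : ∀ u ∈ V, ⟪w, u⟫ = 0)
    (hCw : C w = μ₂ • w) : w ∈ F := by
  have hwmem : w ∈ V ⊔ (E ⊔ F) := hsplit ▸ Submodule.mem_top
  obtain ⟨a, ha, h, hh, heq⟩ := Submodule.mem_sup.mp hwmem
  obtain ⟨b, hb, c, hc, hbc⟩ := Submodule.mem_sup.mp hh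
  have hw : w = a + (b + c) := by rw [← heq, ← hbc]
  -- kill the `V`-component using orthogonality
  have ha0 : a = 0 := by
    have h1 : ⟪w, a⟫ = 0 := horth a ha
    rw [hw, inner_add_left, inner_add_left] at h1
    have h2 : ⟪b, a⟫ = 0 := by rw [real_inner_comm]; exact hVE a ha b hb
    have h3 : ⟪c, a⟫ = 0 := by rw [real_inner_comm]; exact hVF a ha c hc
    rw [h2, h3, add_zero, add_zero] at h1
    exact inner_self_eq_zero.mp h1
  -- kill the `E`-component using the eigenvalue equation
  have hCdec : μ • a + (μ₁ • b + μ₂ • c) = μ₂ • a + (μ₂ • b + μ₂ • c) := by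
    have := hCw
    rw [hw, map_add, map_add, hCV a ha, hCE b hb, hCF c hc, smul_add,
      smul_add] at this
    exact this
  have hb0 : b = 0 := by
    rw [ha0, smul_zero, smul_zero, zero_add, zero_add] at hCdec
    have h4 : (μ₁ - μ₂) • b = 0 := by
      rw [sub_smul, sub_eq_zero]
      exact add_right_cancel hCdec
    rcases smul_eq_zero.mp h4 with h | h
    · exact absurd (sub_eq_zero.mp h) hne
    · exact h
  rw [hw, ha0, hb0, zero_add, zero_add]
  exact hc

/-- Fiberwise formulation. `(M,g,J)` nearly Kähler with
special algebraic torsion: `TM = V ⊕ H` with `ξ_V V = 0`, `ξ_H H ⊆ V`, both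
`J`-stable and parallel; a further parallel `J`-stable orthogonal splitting
`H = E ⊕ F` with `ξ_E E = ξ_F F = 0` is given, where `V, E, F` are eigenbundles
of the parallel tensor `C` (symmetric, commuting with `J`, satisfying the
Chern identity) for eigenvalues `lam, lam₁, lam₂` with `lam₁ + lam₂ = -lam` and
`lam₁ ≠ lam₂`.  Then `ξ_E F ⊆ V`, `ξ_V E ⊆ F` and `ξ_V F ⊆ E`. -/
theorem stmt4
    {W : Type*} [NormedAddCommGroup W] [InnerProductSpace ℝ W]
    [FiniteDimensional ℝ W]
    (J : W →ₗ[ℝ] W)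
    (hJ2 : ∀ x, J (J x) = -x)
    (hJg : ∀ x y, ⟪J x, J y⟫ = ⟪x, y⟫)
    (ξ : W →ₗ[ℝ] W →ₗ[ℝ] W)
    (hξskew : ∀ X Y Z, ⟪ξ X Y, Z⟫ = -⟪Y, ξ X Z⟫)
    (hξalt : ∀ X Y, ξ X Y = - ξ Y X)
    (hξJ : ∀ X Y, ξ X (J Y) + J (ξ X Y) = 0)
    (V E F : Submodule ℝ W)
    -- the splittings TM = V ⊕ H, H = E ⊕ F :
    (hsplit : V ⊔ (E ⊔ F) = ⊤)
    (hVH : ∀ v ∈ V, ∀ x ∈ E ⊔ F, ⟪v, x⟫ = 0)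
    (hEF : ∀ x ∈ E, ∀ y ∈ F, ⟪x, y⟫ = 0)
    -- J-stability :
    (hJV : ∀ v ∈ V, J v ∈ V) (hJE : ∀ x ∈ E, J x ∈ E) (hJF : ∀ y ∈ F, J y ∈ F)
    -- special algebraic torsion and the extra splitting :
    (hξVV : ∀ v ∈ V, ∀ w ∈ V, ξ v w = 0)
    (hξHH : ∀ x ∈ E ⊔ F, ∀ y ∈ E ⊔ F, ξ x y ∈ V)
    (hξEE : ∀ x ∈ E, ∀ y ∈ E, ξ x y = 0)
    (hξFF : ∀ x ∈ F, ∀ y ∈ F, ξ x y = 0)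
    -- the parallel tensor C and its eigenvalues :
    (C : W →ₗ[ℝ] W)
    (hCsym : ∀ x y, ⟪C x, y⟫ = ⟪x, C y⟫)
    (hCJ : ∀ x, C (J x) = J (C x))
    (hChern : ∀ X Y, C (ξ X Y) + ξ X (C Y) + ξ (C X) Y = 0)
    (lam lam₁ lam₂ : ℝ)
    (hCV : ∀ v ∈ V, C v = lam • v)
    (hCE : ∀ x ∈ E, C x = lam₁ • x)
    (hCF : ∀ y ∈ F, C y = lam₂ • y)
    (hlam : lam₁ + lam₂ = -lam)
    (hne : lam₁ ≠ lam₂) :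
    (∀ x ∈ E, ∀ y ∈ F, ξ x y ∈ V) ∧
    (∀ v ∈ V, ∀ x ∈ E, ξ v x ∈ F) ∧
    (∀ v ∈ V, ∀ y ∈ F, ξ v y ∈ E) := by
  -- orthogonality of V with E and with F separately
  have hVE : ∀ v ∈ V, ∀ x ∈ E, ⟪v, x⟫ = 0 := fun v hv x hx =>
    hVH v hv x (Submodule.mem_sup_left hx)
  have hVF : ∀ v ∈ V, ∀ y ∈ F, ⟪v, y⟫ = 0 := fun v hv y hy =>
    hVH v hv y (Submodule.mem_sup_right hy)
  -- ξ v · is orthogonal to V for v ∈ V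
  have horth : ∀ v ∈ V, ∀ z : W, ∀ u ∈ V, ⟪ξ v z, u⟫ = 0 := by
    intro v hv z u hu
    rw [hξskew]
    have hvz : ξ v u = 0 := hξVV v hv u hu
    rw [hvz, inner_zero_right, neg_zero]
  -- eigenvalue computation from the Chern identity
  have hkey : ∀ v ∈ V, ∀ z : W, ∀ μ : ℝ, C z = μ • z →
      C (ξ v z) = -(μ + lam) • ξ v z := by
    intro v hv z μ hz
    have h := hChern v z
    rw [hz, hCV v hv, map_smul, map_smul, LinearMap.smul_apply] at h
    have h2 : C (ξ v z) = -(μ • ξ v z + lam • ξ v z) := by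
      rw [add_assoc] at h
      exact eq_neg_of_add_eq_zero_left h
    rw [h2, neg_smul, add_smul, neg_add]
  constructor
  · intro x hx y hy
    exact hξHH x (Submodule.mem_sup_left hx) y (Submodule.mem_sup_right hy)
  constructor
  · -- ξ_V E ⊆ F
    intro v hv x hx
    apply stmt4_aux V E F hsplit hVE hVF C lam lam₁ lam₂ hCV hCE hCF hne
    · exact horth v hv x
    · have h := hkey v hv x lam₁ (hCE x hx)
      have hs : -(lam₁ + lam) = lam₂ := by linarith
      rwa [hs] at h
  · -- ξ_V F ⊆ E
    intro v hv y hy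
    have hsplit' : V ⊔ (F ⊔ E) = ⊤ := by rwa [sup_comm F E]
    apply stmt4_aux V F E hsplit' hVF hVE C lam lam₂ lam₁ hCV hCF hCE hne.symm
    · exact horth v hv y
    · have h := hkey v hv y lam₂ (hCF y hy)
      have hs : -(lam₂ + lam) = lam₁ := by linarith
      rwa [hs] at h
end

section
/- Let Δ be an irreducible root system, μ = Σ m_i α_i its highest root, and suppose m_i = 2. Let Δ⁺_k = {α ∈ Δ⁺ : n_i(α) = k}. If Δ⁺_2 = {μ} (the only positive root with coefficient 2 at α_i is the highest root), then for every α ∈ Δ⁺_1, μ - α ∈ Δ⁺_1; in particular the number of β ∈ Δ⁺_1 with μ - β ∈ Δ equals card(Δ⁺_1). -/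
/-!
Write `X = ⟪μ, α i⟫`. If `μ - α t` were a root for some `t ≠ i`, it would be a positive root with
coefficient `2` at `i`, hence equal to `μ`; so `⟪μ, α t⟫ ≤ 0` for `t ≠ i`. For `β ∈ Δ⁺_1` this gives
`⟪μ, μ - β⟫ ≤ X`, so `⟪μ, β⟫ > 0` as soon as `X < ⟪μ, μ⟫`, and then `μ - β` is a root whose
coefficients are those of `μ` minus those of `β`.

The inequality `X < ⟪μ, μ⟫` is the heart of the matter. If `X ≥ ⟪μ, μ⟫`, then `α i - μ` is a root.
For `X > ⟪μ, μ⟫` subtracting it from `μ` yields the root `2μ - α i`, with coefficient `3` at `i`,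
which exceeds the highest root. For `X = ⟪μ, μ⟫` subtracting `α i` from it yields the root `-μ`;
then `⟪μ, α t⟫ < 0` for some `t ≠ i` would make `α t + μ` a root with coefficient `2` at `i`, so `μ`
is orthogonal to all `α t` with `t ≠ i`, and expanding `⟪μ, μ⟫` gives `⟪μ, μ⟫ = 2X = 2⟪μ, μ⟫`.
-/

open scoped RealInnerProductSpace

section Coefficients

variable {V ι : Type*} [AddCommGroup V] [Module ℝ V] [Fintype ι]
  {Δ : Set V} {α : ι → V} {coeff : V → ι → ℤ}

theorem coeff_eq_of_eq_sum (hli : LinearIndependent ℝ α)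
    (hexpand : ∀ β ∈ Δ, β = ∑ t, (coeff β t : ℝ) • α t)
    {β : V} (hβ : β ∈ Δ) {c : ι → ℤ} (hc : β = ∑ t, (c t : ℝ) • α t) : coeff β = c := by
  funext t
  exact_mod_cast Fintype.linearIndependent_iffₛ.mp hli _ _ ((hexpand β hβ).symm.trans hc) t

theorem sub_eq_sum_coeff_sub (hexpand : ∀ β ∈ Δ, β = ∑ t, (coeff β t : ℝ) • α t)
    {β γ : V} (hβ : β ∈ Δ) (hγ : γ ∈ Δ) :
    β - γ = ∑ t, ((coeff β - coeff γ) t : ℝ) • α t := by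
  conv_lhs => rw [hexpand β hβ, hexpand γ hγ]
  simp only [Pi.sub_apply, Int.cast_sub, sub_smul, Finset.sum_sub_distrib]

theorem coeff_sub (hli : LinearIndependent ℝ α)
    (hexpand : ∀ β ∈ Δ, β = ∑ t, (coeff β t : ℝ) • α t)
    {β γ : V} (hβ : β ∈ Δ) (hγ : γ ∈ Δ) (hβγ : β - γ ∈ Δ) :
    coeff (β - γ) = coeff β - coeff γ :=
  coeff_eq_of_eq_sum hli hexpand hβγ (sub_eq_sum_coeff_sub hexpand hβ hγ)

theorem coeff_add (hli : LinearIndependent ℝ α)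
    (hexpand : ∀ β ∈ Δ, β = ∑ t, (coeff β t : ℝ) • α t)
    {β γ : V} (hβ : β ∈ Δ) (hγ : γ ∈ Δ) (hβγ : β + γ ∈ Δ) :
    coeff (β + γ) = coeff β + coeff γ := by
  refine coeff_eq_of_eq_sum hli hexpand hβγ ?_
  conv_lhs => rw [hexpand β hβ, hexpand γ hγ]
  simp only [Pi.add_apply, Int.cast_add, add_smul, Finset.sum_add_distrib]

theorem coeff_neg (hli : LinearIndependent ℝ α)
    (hexpand : ∀ β ∈ Δ, β = ∑ t, (coeff β t : ℝ) • α t)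
    {β : V} (hβ : β ∈ Δ) (hβ' : -β ∈ Δ) : coeff (-β) = -coeff β := by
  refine coeff_eq_of_eq_sum hli hexpand hβ' ?_
  conv_lhs => rw [hexpand β hβ]
  simp only [Pi.neg_apply, Int.cast_neg, neg_smul, Finset.sum_neg_distrib]

theorem coeff_simple [DecidableEq ι] (hli : LinearIndependent ℝ α)
    (hexpand : ∀ β ∈ Δ, β = ∑ t, (coeff β t : ℝ) • α t) (hsimple : ∀ s, α s ∈ Δ) (s : ι) :
    coeff (α s) = Pi.single s 1 :=
  coeff_eq_of_eq_sum hli hexpand (hsimple s) (by simp [Pi.single_apply])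

end Coefficients

theorem coeff_nonneg_of_pos {V ι : Type*} {Δ : Set V} {coeff : V → ι → ℤ}
    (hsign : ∀ β ∈ Δ, (∀ t, 0 ≤ coeff β t) ∨ (∀ t, coeff β t ≤ 0))
    {β : V} (hβ : β ∈ Δ) {j : ι} (hj : 0 < coeff β j) (t : ι) : 0 ≤ coeff β t :=
  (hsign β hβ).resolve_right (fun h => (h j).not_gt hj) t

theorem Fintype.sum_le_apply_of_nonpos {ι M : Type*} [Fintype ι] [DecidableEq ι]
    [AddCommMonoid M] [Preorder M] [AddLeftMono M] {g : ι → M} (i : ι)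
    (hg : ∀ t ≠ i, g t ≤ 0) : ∑ t, g t ≤ g i := by
  rw [Fintype.sum_eq_add_sum_compl i g]
  exact add_le_of_nonpos_right (Finset.sum_nonpos fun t ht => hg t (by simpa using ht))

section HighestRoot

variable {V ι : Type*} [NormedAddCommGroup V] [InnerProductSpace ℝ V] [Fintype ι] [DecidableEq ι]
  {Δ : Set V} {α : ι → V} {coeff : V → ι → ℤ} {μ : V} {i : ι}

theorem inner_sum_smul_le (hμα : ∀ t ≠ i, ⟪μ, α t⟫ ≤ 0) {d : ι → ℤ} (hd : ∀ t ≠ i, 0 ≤ d t) :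
    ⟪μ, ∑ t, (d t : ℝ) • α t⟫ ≤ d i * ⟪μ, α i⟫ := by
  simp only [inner_sum, real_inner_smul_right]
  exact Fintype.sum_le_apply_of_nonpos i fun t ht =>
    mul_nonpos_of_nonneg_of_nonpos (by exact_mod_cast hd t ht) (hμα t ht)

theorem ne_simple_of_coeff_eq_two (hli : LinearIndependent ℝ α)
    (hexpand : ∀ β ∈ Δ, β = ∑ t, (coeff β t : ℝ) • α t) (hsimple : ∀ s, α s ∈ Δ)
    (hmi : coeff μ i = 2) (t : ι) : μ ≠ α t := by
  rintro rfl
  rw [coeff_simple hli hexpand hsimple, Pi.single_apply] at hmi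
  split_ifs at hmi <;> omega

theorem sub_simple_notMem (hli : LinearIndependent ℝ α)
    (hexpand : ∀ β ∈ Δ, β = ∑ t, (coeff β t : ℝ) • α t) (hsimple : ∀ s, α s ∈ Δ)
    (hμ : μ ∈ Δ) (hmi : coeff μ i = 2) (hunique : ∀ γ ∈ Δ, coeff γ i = 2 → γ = μ)
    {t : ι} (ht : t ≠ i) : μ - α t ∉ Δ := by
  intro hmem
  have hi : coeff (μ - α t) i = 2 := by
    simp [coeff_sub hli hexpand hμ (hsimple t) hmem, coeff_simple hli hexpand hsimple,
      ht.symm, hmi]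
  exact hli.ne_zero t (sub_eq_self.1 (hunique _ hmem hi))

theorem simple_add_notMem (hli : LinearIndependent ℝ α)
    (hexpand : ∀ β ∈ Δ, β = ∑ t, (coeff β t : ℝ) • α t) (hsimple : ∀ s, α s ∈ Δ)
    (hμ : μ ∈ Δ) (hmi : coeff μ i = 2) (hunique : ∀ γ ∈ Δ, coeff γ i = 2 → γ = μ)
    {t : ι} (ht : t ≠ i) : α t + μ ∉ Δ := by
  intro hmem
  have hi : coeff (α t + μ) i = 2 := by
    simp [coeff_add hli hexpand (hsimple t) hμ hmem, coeff_simple hli hexpand hsimple,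
      ht.symm, hmi]
  exact hli.ne_zero t (add_eq_right.1 (hunique _ hmem hi))

theorem inner_simple_nonpos (hli : LinearIndependent ℝ α)
    (hexpand : ∀ β ∈ Δ, β = ∑ t, (coeff β t : ℝ) • α t) (hsimple : ∀ s, α s ∈ Δ)
    (hstring : ∀ β ∈ Δ, ∀ γ ∈ Δ, 0 < ⟪β, γ⟫ → β ≠ γ → β - γ ∈ Δ)
    (hμ : μ ∈ Δ) (hmi : coeff μ i = 2) (hunique : ∀ γ ∈ Δ, coeff γ i = 2 → γ = μ)
    {t : ι} (ht : t ≠ i) : ⟪μ, α t⟫ ≤ 0 := by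
  by_contra! hpos
  exact sub_simple_notMem hli hexpand hsimple hμ hmi hunique ht <|
    hstring μ hμ _ (hsimple t) hpos (ne_simple_of_coeff_eq_two hli hexpand hsimple hmi t)

theorem inner_simple_nonneg_of_neg_mem (hli : LinearIndependent ℝ α)
    (hexpand : ∀ β ∈ Δ, β = ∑ t, (coeff β t : ℝ) • α t) (hsimple : ∀ s, α s ∈ Δ)
    (hstring : ∀ β ∈ Δ, ∀ γ ∈ Δ, 0 < ⟪β, γ⟫ → β ≠ γ → β - γ ∈ Δ)
    (hμ : μ ∈ Δ) (hneg : -μ ∈ Δ) (hmi : coeff μ i = 2)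
    (hunique : ∀ γ ∈ Δ, coeff γ i = 2 → γ = μ) {t : ι} (ht : t ≠ i) : 0 ≤ ⟪μ, α t⟫ := by
  by_contra! hneg_inner
  have hne : α t ≠ -μ := by
    intro h
    have hi := congrFun (coeff_neg hli hexpand hμ hneg) i
    simp [← h, coeff_simple hli hexpand hsimple, ht, hmi] at hi
  have hmem := hstring _ (hsimple t) _ hneg
    (by rw [inner_neg_right, real_inner_comm]; linarith) hne
  exact simple_add_notMem hli hexpand hsimple hμ hmi hunique ht (by rwa [sub_neg_eq_add] at hmem)

theorem inner_simple_lt_inner_self (hli : LinearIndependent ℝ α)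
    (hexpand : ∀ β ∈ Δ, β = ∑ t, (coeff β t : ℝ) • α t) (hsimple : ∀ s, α s ∈ Δ)
    (hstring : ∀ β ∈ Δ, ∀ γ ∈ Δ, 0 < ⟪β, γ⟫ → β ≠ γ → β - γ ∈ Δ)
    (hμ : μ ∈ Δ) (hhighest : ∀ β ∈ Δ, ∀ t, coeff β t ≤ coeff μ t) (hmi : coeff μ i = 2)
    (hunique : ∀ γ ∈ Δ, coeff γ i = 2 → γ = μ) : ⟪μ, α i⟫ < ⟪μ, μ⟫ := by
  have hμ0 : μ ≠ 0 := by
    rintro rfl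
    simp [coeff_eq_of_eq_sum hli hexpand hμ (c := 0) (by simp)] at hmi
  have hμμ : 0 < ⟪μ, μ⟫ := real_inner_self_pos.2 hμ0
  have hμαi := ne_simple_of_coeff_eq_two hli hexpand hsimple hmi i
  by_contra! hle
  have hη : α i - μ ∈ Δ :=
    hstring _ (hsimple i) _ hμ (by rw [real_inner_comm]; linarith) hμαi.symm
  have hηi : coeff (α i - μ) i = -1 := by
    simp [coeff_sub hli hexpand (hsimple i) hμ hη, coeff_simple hli hexpand hsimple, hmi]
  rcases hle.lt_or_eq with hlt | heq
  · have hne : μ ≠ α i - μ := by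
      intro h
      rw [← h, hmi] at hηi
      omega
    have hmem := hstring μ hμ _ hη (by rw [inner_sub_right]; linarith) hne
    have h3 := hhighest _ hmem i
    rw [coeff_sub hli hexpand hμ hη hmem, Pi.sub_apply, hηi, hmi] at h3
    omega
  · have hαi : ⟪μ, α i⟫ < ⟪α i, α i⟫ := by
      have h := real_inner_self_pos.2 (sub_ne_zero.2 hμαi)
      rw [inner_sub_sub_self, real_inner_comm μ (α i)] at h
      linarith
    have hneg : -μ ∈ Δ := by
      have hne : α i - μ ≠ α i := fun h => hμ0 (neg_eq_zero.1 (by simpa using h))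
      have hmem := hstring _ hη _ (hsimple i)
        (by rw [inner_sub_left, real_inner_comm]; linarith) hne
      rwa [sub_sub_cancel_left] at hmem
    have horth : ∀ t ≠ i, ⟪μ, α t⟫ = 0 := fun t ht =>
      le_antisymm (inner_simple_nonpos hli hexpand hsimple hstring hμ hmi hunique ht)
        (inner_simple_nonneg_of_neg_mem hli hexpand hsimple hstring hμ hneg hmi hunique ht)
    have h2 : ⟪μ, μ⟫ = 2 * ⟪μ, α i⟫ := by
      calc ⟪μ, μ⟫ = ⟪μ, ∑ t, (coeff μ t : ℝ) • α t⟫ := congrArg _ (hexpand μ hμ)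
        _ = ∑ t, (coeff μ t : ℝ) * ⟪μ, α t⟫ := by simp only [inner_sum, real_inner_smul_right]
        _ = 2 * ⟪μ, α i⟫ := by
          rw [Fintype.sum_eq_single i fun t ht => by rw [horth t ht, mul_zero], hmi]
          norm_num
    linarith

theorem highest_sub_mem (hli : LinearIndependent ℝ α)
    (hexpand : ∀ β ∈ Δ, β = ∑ t, (coeff β t : ℝ) • α t) (hsimple : ∀ s, α s ∈ Δ)
    (hstring : ∀ β ∈ Δ, ∀ γ ∈ Δ, 0 < ⟪β, γ⟫ → β ≠ γ → β - γ ∈ Δ)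
    (hμ : μ ∈ Δ) (hhighest : ∀ β ∈ Δ, ∀ t, coeff β t ≤ coeff μ t) (hmi : coeff μ i = 2)
    (hunique : ∀ γ ∈ Δ, coeff γ i = 2 → γ = μ) {β : V} (hβ : β ∈ Δ) (hβi : coeff β i = 1) :
    μ - β ∈ Δ := by
  have hlt := inner_simple_lt_inner_self hli hexpand hsimple hstring hμ hhighest hmi hunique
  have hle : ⟪μ, μ - β⟫ ≤ ⟪μ, α i⟫ := by
    rw [sub_eq_sum_coeff_sub hexpand hμ hβ]
    simpa [hmi, hβi] using inner_sum_smul_le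
      (fun t ht => inner_simple_nonpos hli hexpand hsimple hstring hμ hmi hunique ht)
      (d := coeff μ - coeff β) fun t _ => sub_nonneg.2 (hhighest β hβ t)
  refine hstring μ hμ β hβ (by rw [inner_sub_right] at hle; linarith) ?_
  rintro rfl
  omega

end HighestRoot

theorem stmt13_general
    {V : Type*} [NormedAddCommGroup V] [InnerProductSpace ℝ V]
    {l : ℕ} (Δ : Set V) (α : Fin l → V) (coeff : V → Fin l → ℤ)
    (hli : LinearIndependent ℝ α)
    (hsimple : ∀ i, α i ∈ Δ)
    (hexpand : ∀ β ∈ Δ, β = ∑ i, (coeff β i : ℝ) • α i)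
    (hsign : ∀ β ∈ Δ, (∀ i, 0 ≤ coeff β i) ∨ (∀ i, coeff β i ≤ 0))
    (hstring : ∀ β ∈ Δ, ∀ γ ∈ Δ, 0 < ⟪β, γ⟫ → β ≠ γ → β - γ ∈ Δ)
    (μ : V) (hμ : μ ∈ Δ)
    (hhighest : ∀ β ∈ Δ, ∀ t, coeff β t ≤ coeff μ t)
    (i : Fin l) (hmi : coeff μ i = 2)
    (P1 P2 : Set V)
    (hP1 : P1 = {β ∈ Δ | (∀ t, 0 ≤ coeff β t) ∧ coeff β i = 1})
    (hP2 : P2 = {β ∈ Δ | (∀ t, 0 ≤ coeff β t) ∧ coeff β i = 2})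
    (honly : P2 = {μ}) :
    (∀ β ∈ P1, μ - β ∈ P1) ∧
    {β ∈ P1 | μ - β ∈ Δ} = P1 := by
  subst hP1 hP2
  have hunique : ∀ γ ∈ Δ, coeff γ i = 2 → γ = μ := fun γ hγ hγi =>
    (honly ▸ ⟨hγ, coeff_nonneg_of_pos hsign hγ (j := i) (by omega), hγi⟩ : γ ∈ ({μ} : Set V))
  have hsub : ∀ β ∈ {β ∈ Δ | (∀ t, 0 ≤ coeff β t) ∧ coeff β i = 1},
      μ - β ∈ {β ∈ Δ | (∀ t, 0 ≤ coeff β t) ∧ coeff β i = 1} := by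
    rintro β ⟨hβ, -, hβi⟩
    have hmem := highest_sub_mem hli hexpand hsimple hstring hμ hhighest hmi hunique hβ hβi
    have hc := coeff_sub hli hexpand hμ hβ hmem
    refine ⟨hmem, fun t => ?_, ?_⟩ <;> simp only [hc, Pi.sub_apply]
    · linarith [hhighest β hβ t]
    · omega
  exact ⟨hsub, Set.sep_eq_self_iff_mem_true.2 fun β hβ => (hsub β hβ).1⟩

/-- Let `Δ` be an irreducible root system with simple roots
`α_1,…,α_l`, highest root `μ = Σ m_i α_i` with `m_i = 2`, and
`Δ⁺_k = {α ∈ Δ⁺ : n_i(α) = k}`.  If `Δ⁺_2 = {μ}` then for every `α ∈ Δ⁺_1`,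
`μ - α ∈ Δ⁺_1`; in particular `{β ∈ Δ⁺_1 : μ - β ∈ Δ} = Δ⁺_1` (so its number
of elements is `card Δ⁺_1`). -/
theorem stmt13
    {V : Type*} [NormedAddCommGroup V] [InnerProductSpace ℝ V]
    {l : ℕ} (Δ : Set V) (α : Fin l → V) (coeff : V → Fin l → ℤ)
    (hli : LinearIndependent ℝ α)
    (hsimple : ∀ i, α i ∈ Δ)
    (hexpand : ∀ β ∈ Δ, β = ∑ i, (coeff β i : ℝ) • α i)
    (hsign : ∀ β ∈ Δ, (∀ i, 0 ≤ coeff β i) ∨ (∀ i, coeff β i ≤ 0))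
    (hcrys : ∀ β ∈ Δ, ∀ γ ∈ Δ, ∃ z : ℤ, 2 * ⟪β, γ⟫ = (z : ℝ) * ⟪γ, γ⟫)
    (hstring : ∀ β ∈ Δ, ∀ γ ∈ Δ, 0 < ⟪β, γ⟫ → β ≠ γ → β - γ ∈ Δ)
    (μ : V) (hμ : μ ∈ Δ)
    (hhighest : ∀ β ∈ Δ, ∀ t, coeff β t ≤ coeff μ t)
    (i : Fin l) (hmi : coeff μ i = 2)
    (P1 P2 : Set V)
    (hP1 : P1 = {β ∈ Δ | (∀ t, 0 ≤ coeff β t) ∧ coeff β i = 1})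
    (hP2 : P2 = {β ∈ Δ | (∀ t, 0 ≤ coeff β t) ∧ coeff β i = 2})
    (honly : P2 = {μ}) :
    (∀ β ∈ P1, μ - β ∈ P1) ∧
    {β ∈ P1 | μ - β ∈ Δ} = P1 :=
  stmt13_general Δ α coeff hli hsimple hexpand hsign hstring μ hμ hhighest i hmi P1 P2 hP1 hP2 honly
end

section
/- Let (M = G/K, σ, ⟨·,·⟩) be a Riemannian 3-symmetric space which is naturally reductive with respect to the reductive decomposition g = m ⊕ k. Then the intrinsic torsion of the canonical almost Hermitian structure satisfies ξ_X Y = -(1/2)[X,Y]_m for X, Y ∈ m, the minimal connection ∇^{U(n)} coincides with the canonical connection of the reductive decomposition, and consequently the torsion and curvature of ∇^{U(n)} at the origin are T^{U(n)}(X,Y) = -[X,Y]_m and R^{U(n)}_{X,Y} = ad_{[X,Y]_k}, with ∇^{U(n)} T^{U(n)} = ∇^{U(n)} R^{U(n)} = 0. -/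
/-- Algebraic model of a naturally reductive Riemannian
3-symmetric space `(G/K, σ, ⟨·,·⟩)` with reductive decomposition
`g = m ⊕ k` (`σ³ = 1`, `k = g^σ`, `m = Ker(1+σ+σ²)`, projections
`πk = (1/3)(1+σ+σ²)`, `πm = 1 - πk`), canonical almost complex structure
`J = (1/√3)(2σ + Id)`, and Levi-Civita derivative on invariant fields at the
origin `∇_X Y = (1/2)[X,Y]_m`.  With intrinsic torsion
`ξ_X Y = -(1/2) J((∇_X J)Y)`, we have on `m`:
`ξ_X Y = -(1/2)[X,Y]_m`; the minimal connection `∇ + ξ` is the canonical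
connection (it annihilates invariant fields: `∇_X Y + ξ_X Y = 0`); its torsion
is `T(X,Y) = -[X,Y]_m`, its curvature is `R_{X,Y} = ad_{[X,Y]_k}`, and both
are parallel, i.e. invariant under `ad W` for every `W ∈ k`. -/
theorem stmt15
    {L : Type*} [LieRing L] [LieAlgebra ℝ L]
    (σ : L →ₗ[ℝ] L)
    (hbr : ∀ x y : L, σ ⁅x, y⁆ = ⁅σ x, σ y⁆)
    (hord : ∀ x, σ (σ (σ x)) = x)
    (m : Submodule ℝ L)
    (hm : m = LinearMap.ker (LinearMap.id + σ + σ ∘ₗ σ))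
    (πk πm : L →ₗ[ℝ] L)
    (hπk : πk = (3⁻¹ : ℝ) • (LinearMap.id + σ + σ ∘ₗ σ))
    (hπm : πm = LinearMap.id - πk)
    (J : L →ₗ[ℝ] L)
    (hJ : J = (Real.sqrt 3)⁻¹ • ((2 : ℝ) • σ + LinearMap.id))
    (ip : L → L → ℝ)
    (hipsym : ∀ x y, ip x y = ip y x)
    -- natural reductivity of the metric
    (hnat : ∀ X ∈ m, ∀ Y ∈ m, ∀ Z ∈ m, ip (πm ⁅X, Y⁆) Z + ip (πm ⁅X, Z⁆) Y = 0)
    -- Levi-Civita connection on invariant fields at the origin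
    (D : L → L → L)
    (hD : ∀ X Y, D X Y = (2⁻¹ : ℝ) • πm ⁅X, Y⁆)
    -- intrinsic torsion ξ_X Y = -(1/2) J ((∇_X J) Y)
    (ξ : L → L → L)
    (hξ : ∀ X Y, ξ X Y = -(2⁻¹ : ℝ) • J (D X (J Y) - J (D X Y))) :
    -- ξ_X Y = -(1/2)[X,Y]_m
    (∀ X ∈ m, ∀ Y ∈ m, ξ X Y = -(2⁻¹ : ℝ) • πm ⁅X, Y⁆) ∧
    -- the minimal connection coincides with the canonical connection
    (∀ X ∈ m, ∀ Y ∈ m, D X Y + ξ X Y = 0) ∧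
    -- torsion of the minimal connection: T(X,Y) = -[X,Y]_m
    (∀ X ∈ m, ∀ Y ∈ m,
      (D X Y + ξ X Y) - (D Y X + ξ Y X) - πm ⁅X, Y⁆ = -πm ⁅X, Y⁆) ∧
    -- ∇^{U(n)} T^{U(n)} = 0 : ad W is a derivation of T for W ∈ k
    (∀ W, σ W = W → ∀ X ∈ m, ∀ Y ∈ m,
      ⁅W, πm ⁅X, Y⁆⁆ = πm ⁅⁅W, X⁆, Y⁆ + πm ⁅X, ⁅W, Y⁆⁆) ∧
    -- ∇^{U(n)} R^{U(n)} = 0 : ad W is a derivation of R_{X,Y}Z = [[X,Y]_k, Z]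
    (∀ W, σ W = W → ∀ X ∈ m, ∀ Y ∈ m, ∀ Z ∈ m,
      ⁅W, ⁅πk ⁅X, Y⁆, Z⁆⁆ = ⁅πk ⁅⁅W, X⁆, Y⁆, Z⁆ + ⁅πk ⁅X, ⁅W, Y⁆⁆, Z⁆
        + ⁅πk ⁅X, Y⁆, ⁅W, Z⁆⁆) := by
  -- scalar arithmetic for √3
  have hs : (Real.sqrt 3)⁻¹ * (Real.sqrt 3)⁻¹ = (3⁻¹ : ℝ) := by
    rw [← mul_inv, Real.mul_self_sqrt (by norm_num : (0:ℝ) ≤ 3)]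
  -- pointwise formulas
  have hπkapp : ∀ z, πk z = (3⁻¹ : ℝ) • (z + σ z + σ (σ z)) := by
    intro z; rw [hπk]
    simp [LinearMap.smul_apply, LinearMap.add_apply, LinearMap.comp_apply]
  have hπmapp : ∀ z, πm z = z - (3⁻¹ : ℝ) • (z + σ z + σ (σ z)) := by
    intro z; rw [hπm, LinearMap.sub_apply, LinearMap.id_apply, hπkapp]
  have hJapp : ∀ z, J z = (Real.sqrt 3)⁻¹ • ((2 : ℝ) • σ z + z) := by
    intro z; rw [hJ]
    simp [LinearMap.smul_apply, LinearMap.add_apply]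
  have hfix : ∀ z, σ z = z → πm z = 0 := by
    intro z hz
    rw [hπmapp, hz, hz]
    module
  have hcommσ : ∀ z, σ (πm z) = πm (σ z) := by
    intro z
    rw [hπmapp, hπmapp, map_sub, map_smul, map_add, map_add, hord]
  have hcommJ : ∀ z, J (πm z) = πm (J z) := by
    intro z
    rw [hJapp, hJapp, map_smul, map_add, map_smul, hcommσ]
  have hJ2 : ∀ z, J (J z) = (3⁻¹ : ℝ) • ((4:ℝ) • σ (σ z) + (4:ℝ) • σ z + z) := by
    intro z
    simp only [hJapp, map_add, map_smul, smul_add, smul_smul]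
    match_scalars <;> first
      | linear_combination (4:ℝ) * hs
      | linear_combination (2:ℝ) * hs
      | linear_combination hs
  have hmem : ∀ z ∈ m, σ (σ z) = -z - σ z := by
    intro z hz
    rw [hm] at hz
    have h := LinearMap.mem_ker.mp hz
    simp only [LinearMap.add_apply, LinearMap.comp_apply, LinearMap.id_apply] at h
    rw [← sub_eq_zero, show σ (σ z) - (-z - σ z) = z + σ z + σ (σ z) by abel]
    exact h
  -- claim 1
  have key1 : ∀ X ∈ m, ∀ Y ∈ m, ξ X Y = -(2⁻¹ : ℝ) • πm ⁅X, Y⁆ := by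
    intro X hX Y hY
    have hX' := hmem X hX
    have hY' := hmem Y hY
    have hσP : σ ⁅X, Y⁆ = ⁅σ X, σ Y⁆ := hbr X Y
    have hσQ : σ ⁅X, σ Y⁆ = -⁅σ X, Y⁆ - ⁅σ X, σ Y⁆ := by
      rw [hbr, hY', lie_sub, lie_neg]
    have hσB : σ ⁅σ X, σ Y⁆ = ⁅X, Y⁆ + ⁅X, σ Y⁆ + ⁅σ X, Y⁆ + ⁅σ X, σ Y⁆ := by
      rw [hbr, hX', hY', sub_lie, neg_lie, lie_sub, lie_neg, lie_sub, lie_neg]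
      abel
    have hJw : J ((2:ℝ) • ⁅X, σ Y⁆ + ⁅X, Y⁆)
        = (Real.sqrt 3)⁻¹ • ((2:ℝ) • ⁅X, σ Y⁆ - (4:ℝ) • ⁅σ X, Y⁆
            - (2:ℝ) • ⁅σ X, σ Y⁆ + ⁅X, Y⁆) := by
      rw [hJapp, map_add, map_smul, hσQ, hσP]
      module
    have hT1 : J (D X (J Y)) = (6⁻¹ : ℝ) • πm ((2:ℝ) • ⁅X, σ Y⁆
        - (4:ℝ) • ⁅σ X, Y⁆ - (2:ℝ) • ⁅σ X, σ Y⁆ + ⁅X, Y⁆) := by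
      have hb : ⁅X, J Y⁆ = (Real.sqrt 3)⁻¹ • ((2:ℝ) • ⁅X, σ Y⁆ + ⁅X, Y⁆) := by
        rw [hJapp, lie_smul, lie_add, lie_smul]
      rw [hD, hb]
      simp only [map_smul]
      rw [hcommJ, hJw, map_smul]
      match_scalars
      linear_combination (2⁻¹ : ℝ) * hs
    have hT2 : J (J (D X Y)) = (6⁻¹ : ℝ) • πm ((5:ℝ) • ⁅X, Y⁆
        + (4:ℝ) • ⁅X, σ Y⁆ + (4:ℝ) • ⁅σ X, Y⁆ + (8:ℝ) • ⁅σ X, σ Y⁆) := by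
      rw [hD]
      simp only [map_smul]
      rw [hcommJ, hcommJ, hJ2, hσP, hσB]
      rw [show (4:ℝ) • (⁅X, Y⁆ + ⁅X, σ Y⁆ + ⁅σ X, Y⁆ + ⁅σ X, σ Y⁆)
            + (4:ℝ) • ⁅σ X, σ Y⁆ + ⁅X, Y⁆
          = (5:ℝ) • ⁅X, Y⁆ + (4:ℝ) • ⁅X, σ Y⁆ + (4:ℝ) • ⁅σ X, Y⁆
            + (8:ℝ) • ⁅σ X, σ Y⁆ by module]
      rw [map_smul, smul_smul]
      match_scalars
      ring
    have hσR : σ ⁅σ X, Y⁆ = -⁅X, σ Y⁆ - ⁅σ X, σ Y⁆ := by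
      rw [hbr, hX', sub_lie, neg_lie]
    have hv : πm ((5:ℝ) • ⁅X, Y⁆ + ⁅X, σ Y⁆ + (4:ℝ) • ⁅σ X, Y⁆
        + (5:ℝ) • ⁅σ X, σ Y⁆) = 0 := by
      apply hfix
      rw [map_add, map_add, map_add, map_smul, map_smul, map_smul,
        hσP, hσQ, hσR, hσB]
      module
    rw [hξ, map_sub, hT1, hT2]
    calc -(2⁻¹ : ℝ) • ((6⁻¹ : ℝ) • πm ((2:ℝ) • ⁅X, σ Y⁆ - (4:ℝ) • ⁅σ X, Y⁆
            - (2:ℝ) • ⁅σ X, σ Y⁆ + ⁅X, Y⁆)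
          - (6⁻¹ : ℝ) • πm ((5:ℝ) • ⁅X, Y⁆ + (4:ℝ) • ⁅X, σ Y⁆
            + (4:ℝ) • ⁅σ X, Y⁆ + (8:ℝ) • ⁅σ X, σ Y⁆))
        = -(2⁻¹ : ℝ) • πm ⁅X, Y⁆
          + (6⁻¹ : ℝ) • πm ((5:ℝ) • ⁅X, Y⁆ + ⁅X, σ Y⁆ + (4:ℝ) • ⁅σ X, Y⁆
            + (5:ℝ) • ⁅σ X, σ Y⁆) := by
          simp only [map_add, map_sub, map_smul]
          module
      _ = -(2⁻¹ : ℝ) • πm ⁅X, Y⁆ := by rw [hv, smul_zero, add_zero]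
  -- claim 2
  have key2 : ∀ X ∈ m, ∀ Y ∈ m, D X Y + ξ X Y = 0 := by
    intro X hX Y hY
    rw [key1 X hX Y hY, hD]
    module
  -- derivation helpers
  have hadW : ∀ W, σ W = W → ∀ z, σ ⁅W, z⁆ = ⁅W, σ z⁆ := by
    intro W hW z; rw [hbr, hW]
  have hπmW : ∀ W, σ W = W → ∀ z, πm ⁅W, z⁆ = ⁅W, πm z⁆ := by
    intro W hW z
    rw [hπmapp, hπmapp, hadW W hW, hadW W hW, lie_sub, lie_smul, lie_add, lie_add]
  have hπkW : ∀ W, σ W = W → ∀ z, πk ⁅W, z⁆ = ⁅W, πk z⁆ := by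
    intro W hW z
    rw [hπkapp, hπkapp, hadW W hW, hadW W hW, lie_smul, lie_add, lie_add]
  refine ⟨key1, key2, ?_, ?_, ?_⟩
  · intro X hX Y hY
    rw [key2 X hX Y hY, key2 Y hY X hX]
    abel
  · intro W hW X hX Y hY
    rw [← hπmW W hW, ← map_add, ← leibniz_lie, hπmW W hW]
  · intro W hW X hX Y hY Z hZ
    calc ⁅W, ⁅πk ⁅X, Y⁆, Z⁆⁆
        = ⁅⁅W, πk ⁅X, Y⁆⁆, Z⁆ + ⁅πk ⁅X, Y⁆, ⁅W, Z⁆⁆ := leibniz_lie W _ Z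
      _ = _ := by
          rw [← hπkW W hW, leibniz_lie W X Y, map_add, add_lie]
end

section
/- Let Δ⁺ be the positive roots of a complex simple Lie algebra, H = (1/3)(H_i + H_j) with m_i = m_j = 1 (coefficients of the highest root), and let Δ⁺_{p,q} = {α ∈ Δ⁺ : n_i(α) = p, n_j(α) = q}. Then the subspaces V_k ⊂ m spanned by {U^a_α : α ∈ Δ⁺_{1,1}}, {U^a_α : α ∈ Δ⁺_{1,0}}, {U^a_α : α ∈ Δ⁺_{0,1}} (k = 1,2,3, a = 0,1) satisfy: [k, V_k] ⊆ V_k for k the fixed-point algebra of σ = Ad_{exp 2π√(-1)H}, [V_k, V_k] ⊆ k, and [V_k, V_r]_m ⊆ V_s for any permutation (k,r,s) of (1,2,3). -/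
lemma lie_span_span {L : Type*} [LieRing L] [LieAlgebra ℝ L] {S T : Set L} {W : Submodule ℝ L}
    (h : ∀ x ∈ S, ∀ y ∈ T, ⁅x, y⁆ ∈ W) :
    ∀ x ∈ Submodule.span ℝ S, ∀ y ∈ Submodule.span ℝ T, ⁅x, y⁆ ∈ W := by
  have step : ∀ x ∈ S, ∀ y ∈ Submodule.span ℝ T, ⁅x, y⁆ ∈ W := by
    intro x hx y hy
    induction hy using Submodule.span_induction with
    | mem z hz => exact h x hx z hz
    | zero => rw [lie_zero]; exact W.zero_mem
    | add _ _ _ _ h1 h2 => rw [lie_add]; exact W.add_mem h1 h2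
    | smul c _ _ h1 => rw [lie_smul]; exact W.smul_mem c h1
  intro x hx y hy
  induction hx using Submodule.span_induction with
  | mem z hz => exact step z hz y hy
  | zero => rw [zero_lie]; exact W.zero_mem
  | add _ _ _ _ h1 h2 => rw [add_lie]; exact W.add_mem h1 h2
  | smul c _ _ h1 => rw [smul_lie]; exact W.smul_mem c h1

lemma pair_span_le {L : Type*} [LieRing L] [LieAlgebra ℝ L] {W : Submodule ℝ L} {u v w : L}
    (hu : u ∈ W) (hv : v ∈ W) (hw : w ∈ Submodule.span ℝ {u, v}) : w ∈ W :=
  Submodule.span_le.mpr (by rintro z (rfl | rfl) <;> assumption) hw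

lemma U_neg_parity {L : Type*} [AddCommGroup L] {R : Type*} [AddCommGroup R]
    (U : ℕ → R → L)
    (hUper : ∀ (a : ℕ) (α : R), U (a + 2) α = U a α)
    (hUneg0 : ∀ α, U 0 (-α) = -U 0 α)
    (hUneg1 : ∀ α, U 1 (-α) = U 1 α) :
    ∀ b α, U b (-α) = U b α ∨ U b (-α) = -U b α := by
  intro b
  induction b using Nat.strong_induction_on with
  | _ b ih =>
    match b with
    | 0 => intro α; right; exact hUneg0 α
    | 1 => intro α; left; exact hUneg1 α
    | (n+2) => intro α; rw [hUper, hUper]; exact ih n (by omega) α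

/-- Compact real form decomposition for an inner automorphism
of Type `A₃II` (`H = (1/3)(H_i + H_j)` with `m_i = m_j = 1`, so every root has
`n_i, n_j ∈ {-1,0,1}`).  With `Δ_{p,q} = {α ∈ Δ : |n_i(α)| = p, |n_j(α)| = q}`,
the fixed-point algebra is `k = h ⊕ span{U^a_α : α ∈ Δ_{0,0}}` and
`V₁, V₂, V₃` are the spans of the `U^a_α` for `α` in `Δ_{1,1}, Δ_{1,0},
Δ_{0,1}`.  Then `[k, V_k] ⊆ V_k`, `[V_k, V_k] ⊆ k`, and
`[V_k, V_r] ⊆ V_s + k` (i.e. `[V_k,V_r]_m ⊆ V_s`) for each permutation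
`(k,r,s)` of `(1,2,3)`. -/
theorem stmt16
    {L : Type*} [LieRing L] [LieAlgebra ℝ L]
    {R : Type*} [AddCommGroup R]
    (Δ : Set R) (hsym : ∀ a, a ∈ Δ ↔ -a ∈ Δ)
    (ni nj : R →+ ℤ)
    (hm1 : ∀ α ∈ Δ, ni α = 0 ∨ ni α = 1 ∨ ni α = -1)
    (hm2 : ∀ α ∈ Δ, nj α = 0 ∨ nj α = 1 ∨ nj α = -1)
    (U : ℕ → R → L) (Hc : Set L)
    (hU0 : ∀ (a : ℕ) (α : R), α ∉ Δ → U a α = 0)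
    (hUper : ∀ (a : ℕ) (α : R), U (a + 2) α = U a α)
    (hUneg0 : ∀ α, U 0 (-α) = -U 0 α)
    (hUneg1 : ∀ α, U 1 (-α) = U 1 α)
    (hbrUU : ∀ (a b : ℕ) (α β : R), α ∈ Δ → β ∈ Δ → α + β ≠ 0 → α ≠ β →
      ⁅U a α, U b β⁆ ∈ Submodule.span ℝ {U (a + b) (α + β), U (a + b) (α - β)})
    (hbrUUsame : ∀ (a b : ℕ) (α : R), ⁅U a α, U b α⁆ ∈ Submodule.span ℝ Hc)
    (hbrH : ∀ h ∈ Hc, ∀ (a : ℕ) (α : R), ⁅h, U a α⁆ ∈ Submodule.span ℝ {U 0 α, U 1 α})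
    (hbrHH : ∀ h ∈ Hc, ∀ h' ∈ Hc, ⁅h, h'⁆ = 0)
    (K V1 V2 V3 : Submodule ℝ L)
    (hK : K = Submodule.span ℝ
      (Hc ∪ {x | ∃ (a : ℕ) (α : R), α ∈ Δ ∧ ni α = 0 ∧ nj α = 0 ∧ x = U a α}))
    (hV1 : V1 = Submodule.span ℝ
      {x | ∃ (a : ℕ) (α : R), α ∈ Δ ∧ ni α ≠ 0 ∧ nj α ≠ 0 ∧ x = U a α})
    (hV2 : V2 = Submodule.span ℝ
      {x | ∃ (a : ℕ) (α : R), α ∈ Δ ∧ ni α ≠ 0 ∧ nj α = 0 ∧ x = U a α})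
    (hV3 : V3 = Submodule.span ℝ
      {x | ∃ (a : ℕ) (α : R), α ∈ Δ ∧ ni α = 0 ∧ nj α ≠ 0 ∧ x = U a α}) :
    -- [k, V_k] ⊆ V_k
    ((∀ x ∈ K, ∀ v ∈ V1, ⁅x, v⁆ ∈ V1) ∧
     (∀ x ∈ K, ∀ v ∈ V2, ⁅x, v⁆ ∈ V2) ∧
     (∀ x ∈ K, ∀ v ∈ V3, ⁅x, v⁆ ∈ V3)) ∧
    -- [V_k, V_k] ⊆ k
    ((∀ x ∈ V1, ∀ y ∈ V1, ⁅x, y⁆ ∈ K) ∧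
     (∀ x ∈ V2, ∀ y ∈ V2, ⁅x, y⁆ ∈ K) ∧
     (∀ x ∈ V3, ∀ y ∈ V3, ⁅x, y⁆ ∈ K)) ∧
    -- [V_k, V_r]_m ⊆ V_s
    ((∀ x ∈ V1, ∀ y ∈ V2, ⁅x, y⁆ ∈ V3 ⊔ K) ∧
     (∀ x ∈ V1, ∀ y ∈ V3, ⁅x, y⁆ ∈ V2 ⊔ K) ∧
     (∀ x ∈ V2, ∀ y ∈ V3, ⁅x, y⁆ ∈ V1 ⊔ K)) := by
  have upar := U_neg_parity U hUper hUneg0 hUneg1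
  -- generator membership helpers
  have genV1 : ∀ (c : ℕ) (γ : R), (γ ∈ Δ → ni γ ≠ 0 ∧ nj γ ≠ 0) → U c γ ∈ V1 := by
    intro c γ h
    by_cases hγ : γ ∈ Δ
    · exact hV1 ▸ Submodule.subset_span ⟨c, γ, hγ, (h hγ).1, (h hγ).2, rfl⟩
    · rw [hU0 c γ hγ]; exact zero_mem _
  have genV2 : ∀ (c : ℕ) (γ : R), (γ ∈ Δ → ni γ ≠ 0 ∧ nj γ = 0) → U c γ ∈ V2 := by
    intro c γ h
    by_cases hγ : γ ∈ Δ
    · exact hV2 ▸ Submodule.subset_span ⟨c, γ, hγ, (h hγ).1, (h hγ).2, rfl⟩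
    · rw [hU0 c γ hγ]; exact zero_mem _
  have genV3 : ∀ (c : ℕ) (γ : R), (γ ∈ Δ → ni γ = 0 ∧ nj γ ≠ 0) → U c γ ∈ V3 := by
    intro c γ h
    by_cases hγ : γ ∈ Δ
    · exact hV3 ▸ Submodule.subset_span ⟨c, γ, hγ, (h hγ).1, (h hγ).2, rfl⟩
    · rw [hU0 c γ hγ]; exact zero_mem _
  have genK : ∀ (c : ℕ) (γ : R), (γ ∈ Δ → ni γ = 0 ∧ nj γ = 0) → U c γ ∈ K := by
    intro c γ h
    by_cases hγ : γ ∈ Δ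
    · exact hK ▸ Submodule.subset_span (Or.inr ⟨c, γ, hγ, (h hγ).1, (h hγ).2, rfl⟩)
    · rw [hU0 c γ hγ]; exact zero_mem _
  have hHcK : Submodule.span ℝ Hc ≤ K := hK ▸ Submodule.span_mono Set.subset_union_left
  -- combined bracket helper
  have hbr' : ∀ (a b : ℕ) (α β : R) (W : Submodule ℝ L), α ∈ Δ → β ∈ Δ → α + β ≠ 0 → α ≠ β →
      U (a + b) (α + β) ∈ W → U (a + b) (α - β) ∈ W → ⁅U a α, U b β⁆ ∈ W :=
    fun a b α β _ h1 h2 h3 h4 m1 m2 => pair_span_le m1 m2 (hbrUU a b α β h1 h2 h3 h4)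
  refine ⟨⟨?_, ?_, ?_⟩, ⟨?_, ?_, ?_⟩, ?_, ?_, ?_⟩
  -- [K, V1] ⊆ V1
  · intro x hx v hv
    rw [hK] at hx; rw [hV1] at hv
    refine lie_span_span ?_ x hx v hv
    rintro u (hu | ⟨a, α, hα, h1, h2, rfl⟩) v ⟨b, β, hβ, h3, h4, rfl⟩
    · exact pair_span_le (genV1 0 β fun _ => ⟨h3, h4⟩) (genV1 1 β fun _ => ⟨h3, h4⟩)
        (hbrH u hu b β)
    · refine hbr' a b α β _ hα hβ ?_ ?_ ?_ ?_
      · intro h0; apply h3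
        have e : ni α + ni β = (0:ℤ) := by rw [← map_add, h0, map_zero]
        omega
      · intro h; apply h3; rw [← h]; exact h1
      · refine genV1 _ _ fun hγ => ?_
        have e1 : ni (α + β) = ni α + ni β := map_add _ _ _
        have e2 : nj (α + β) = nj α + nj β := map_add _ _ _
        constructor <;> omega
      · refine genV1 _ _ fun hγ => ?_
        have e1 : ni (α - β) = ni α - ni β := map_sub _ _ _
        have e2 : nj (α - β) = nj α - nj β := map_sub _ _ _
        constructor <;> omega
  -- [K, V2] ⊆ V2
  · intro x hx v hv
    rw [hK] at hx; rw [hV2] at hv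
    refine lie_span_span ?_ x hx v hv
    rintro u (hu | ⟨a, α, hα, h1, h2, rfl⟩) v ⟨b, β, hβ, h3, h4, rfl⟩
    · exact pair_span_le (genV2 0 β fun _ => ⟨h3, h4⟩) (genV2 1 β fun _ => ⟨h3, h4⟩)
        (hbrH u hu b β)
    · refine hbr' a b α β _ hα hβ ?_ ?_ ?_ ?_
      · intro h0; apply h3
        have e : ni α + ni β = (0:ℤ) := by rw [← map_add, h0, map_zero]
        omega
      · intro h; apply h3; rw [← h]; exact h1
      · refine genV2 _ _ fun hγ => ?_
        have e1 : ni (α + β) = ni α + ni β := map_add _ _ _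
        have e2 : nj (α + β) = nj α + nj β := map_add _ _ _
        constructor <;> omega
      · refine genV2 _ _ fun hγ => ?_
        have e1 : ni (α - β) = ni α - ni β := map_sub _ _ _
        have e2 : nj (α - β) = nj α - nj β := map_sub _ _ _
        constructor <;> omega
  -- [K, V3] ⊆ V3
  · intro x hx v hv
    rw [hK] at hx; rw [hV3] at hv
    refine lie_span_span ?_ x hx v hv
    rintro u (hu | ⟨a, α, hα, h1, h2, rfl⟩) v ⟨b, β, hβ, h3, h4, rfl⟩
    · exact pair_span_le (genV3 0 β fun _ => ⟨h3, h4⟩) (genV3 1 β fun _ => ⟨h3, h4⟩)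
        (hbrH u hu b β)
    · refine hbr' a b α β _ hα hβ ?_ ?_ ?_ ?_
      · intro h0; apply h4
        have e : nj α + nj β = (0:ℤ) := by rw [← map_add, h0, map_zero]
        omega
      · intro h; apply h4; rw [← h]; exact h2
      · refine genV3 _ _ fun hγ => ?_
        have e1 : ni (α + β) = ni α + ni β := map_add _ _ _
        have e2 : nj (α + β) = nj α + nj β := map_add _ _ _
        constructor <;> omega
      · refine genV3 _ _ fun hγ => ?_
        have e1 : ni (α - β) = ni α - ni β := map_sub _ _ _
        have e2 : nj (α - β) = nj α - nj β := map_sub _ _ _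
        constructor <;> omega
  -- [V1, V1] ⊆ K
  · intro x hx v hv
    rw [hV1] at hx hv
    refine lie_span_span ?_ x hx v hv
    rintro u ⟨a, α, hα, h1, h2, rfl⟩ v ⟨b, β, hβ, h3, h4, rfl⟩
    by_cases hs : α = β
    · subst hs; exact hHcK (hbrUUsame a b α)
    by_cases h0 : α + β = 0
    · have hb : β = -α := by rw [← neg_eq_of_add_eq_zero_right h0]
      subst hb
      rcases upar b α with h | h
      · rw [h]; exact hHcK (hbrUUsame a b α)
      · rw [h, lie_neg]; exact neg_mem (hHcK (hbrUUsame a b α))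
    refine hbr' a b α β _ hα hβ h0 hs ?_ ?_
    · refine genK _ _ fun hγ => ?_
      have e1 : ni (α + β) = ni α + ni β := map_add _ _ _
      have e2 : nj (α + β) = nj α + nj β := map_add _ _ _
      have g1 := hm1 α hα; have g2 := hm1 β hβ; have g3 := hm1 _ hγ
      have g4 := hm2 α hα; have g5 := hm2 β hβ; have g6 := hm2 _ hγ
      constructor <;> omega
    · refine genK _ _ fun hγ => ?_
      have e1 : ni (α - β) = ni α - ni β := map_sub _ _ _
      have e2 : nj (α - β) = nj α - nj β := map_sub _ _ _
      have g1 := hm1 α hα; have g2 := hm1 β hβ; have g3 := hm1 _ hγ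
      have g4 := hm2 α hα; have g5 := hm2 β hβ; have g6 := hm2 _ hγ
      constructor <;> omega
  -- [V2, V2] ⊆ K
  · intro x hx v hv
    rw [hV2] at hx hv
    refine lie_span_span ?_ x hx v hv
    rintro u ⟨a, α, hα, h1, h2, rfl⟩ v ⟨b, β, hβ, h3, h4, rfl⟩
    by_cases hs : α = β
    · subst hs; exact hHcK (hbrUUsame a b α)
    by_cases h0 : α + β = 0
    · have hb : β = -α := by rw [← neg_eq_of_add_eq_zero_right h0]
      subst hb
      rcases upar b α with h | h
      · rw [h]; exact hHcK (hbrUUsame a b α)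
      · rw [h, lie_neg]; exact neg_mem (hHcK (hbrUUsame a b α))
    refine hbr' a b α β _ hα hβ h0 hs ?_ ?_
    · refine genK _ _ fun hγ => ?_
      have e1 : ni (α + β) = ni α + ni β := map_add _ _ _
      have e2 : nj (α + β) = nj α + nj β := map_add _ _ _
      have g1 := hm1 α hα; have g2 := hm1 β hβ; have g3 := hm1 _ hγ
      constructor <;> omega
    · refine genK _ _ fun hγ => ?_
      have e1 : ni (α - β) = ni α - ni β := map_sub _ _ _
      have e2 : nj (α - β) = nj α - nj β := map_sub _ _ _
      have g1 := hm1 α hα; have g2 := hm1 β hβ; have g3 := hm1 _ hγ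
      constructor <;> omega
  -- [V3, V3] ⊆ K
  · intro x hx v hv
    rw [hV3] at hx hv
    refine lie_span_span ?_ x hx v hv
    rintro u ⟨a, α, hα, h1, h2, rfl⟩ v ⟨b, β, hβ, h3, h4, rfl⟩
    by_cases hs : α = β
    · subst hs; exact hHcK (hbrUUsame a b α)
    by_cases h0 : α + β = 0
    · have hb : β = -α := by rw [← neg_eq_of_add_eq_zero_right h0]
      subst hb
      rcases upar b α with h | h
      · rw [h]; exact hHcK (hbrUUsame a b α)
      · rw [h, lie_neg]; exact neg_mem (hHcK (hbrUUsame a b α))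
    refine hbr' a b α β _ hα hβ h0 hs ?_ ?_
    · refine genK _ _ fun hγ => ?_
      have e1 : ni (α + β) = ni α + ni β := map_add _ _ _
      have e2 : nj (α + β) = nj α + nj β := map_add _ _ _
      have g4 := hm2 α hα; have g5 := hm2 β hβ; have g6 := hm2 _ hγ
      constructor <;> omega
    · refine genK _ _ fun hγ => ?_
      have e1 : ni (α - β) = ni α - ni β := map_sub _ _ _
      have e2 : nj (α - β) = nj α - nj β := map_sub _ _ _
      have g4 := hm2 α hα; have g5 := hm2 β hβ; have g6 := hm2 _ hγ
      constructor <;> omega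
  -- [V1, V2] ⊆ V3 ⊔ K
  · intro x hx v hv
    rw [hV1] at hx; rw [hV2] at hv
    refine lie_span_span ?_ x hx v hv
    rintro u ⟨a, α, hα, h1, h2, rfl⟩ v ⟨b, β, hβ, h3, h4, rfl⟩
    refine hbr' a b α β _ hα hβ ?_ ?_ ?_ ?_
    · intro h0; apply h2
      have e : nj α + nj β = (0:ℤ) := by rw [← map_add, h0, map_zero]
      omega
    · intro h; apply h2; rw [h]; exact h4
    · refine Submodule.mem_sup_left (genV3 _ _ fun hγ => ?_)
      have e1 : ni (α + β) = ni α + ni β := map_add _ _ _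
      have e2 : nj (α + β) = nj α + nj β := map_add _ _ _
      have g1 := hm1 α hα; have g2 := hm1 β hβ; have g3 := hm1 _ hγ
      constructor <;> omega
    · refine Submodule.mem_sup_left (genV3 _ _ fun hγ => ?_)
      have e1 : ni (α - β) = ni α - ni β := map_sub _ _ _
      have e2 : nj (α - β) = nj α - nj β := map_sub _ _ _
      have g1 := hm1 α hα; have g2 := hm1 β hβ; have g3 := hm1 _ hγ
      constructor <;> omega
  -- [V1, V3] ⊆ V2 ⊔ K
  · intro x hx v hv
    rw [hV1] at hx; rw [hV3] at hv
    refine lie_span_span ?_ x hx v hv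
    rintro u ⟨a, α, hα, h1, h2, rfl⟩ v ⟨b, β, hβ, h3, h4, rfl⟩
    refine hbr' a b α β _ hα hβ ?_ ?_ ?_ ?_
    · intro h0; apply h1
      have e : ni α + ni β = (0:ℤ) := by rw [← map_add, h0, map_zero]
      omega
    · intro h; apply h1; rw [h]; exact h3
    · refine Submodule.mem_sup_left (genV2 _ _ fun hγ => ?_)
      have e1 : ni (α + β) = ni α + ni β := map_add _ _ _
      have e2 : nj (α + β) = nj α + nj β := map_add _ _ _
      have g4 := hm2 α hα; have g5 := hm2 β hβ; have g6 := hm2 _ hγ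
      constructor <;> omega
    · refine Submodule.mem_sup_left (genV2 _ _ fun hγ => ?_)
      have e1 : ni (α - β) = ni α - ni β := map_sub _ _ _
      have e2 : nj (α - β) = nj α - nj β := map_sub _ _ _
      have g4 := hm2 α hα; have g5 := hm2 β hβ; have g6 := hm2 _ hγ
      constructor <;> omega
  -- [V2, V3] ⊆ V1 ⊔ K
  · intro x hx v hv
    rw [hV2] at hx; rw [hV3] at hv
    refine lie_span_span ?_ x hx v hv
    rintro u ⟨a, α, hα, h1, h2, rfl⟩ v ⟨b, β, hβ, h3, h4, rfl⟩
    refine hbr' a b α β _ hα hβ ?_ ?_ ?_ ?_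
    · intro h0; apply h1
      have e : ni α + ni β = (0:ℤ) := by rw [← map_add, h0, map_zero]
      omega
    · intro h; apply h1; rw [h]; exact h3
    · refine Submodule.mem_sup_left (genV1 _ _ fun hγ => ?_)
      have e1 : ni (α + β) = ni α + ni β := map_add _ _ _
      have e2 : nj (α + β) = nj α + nj β := map_add _ _ _
      constructor <;> omega
    · refine Submodule.mem_sup_left (genV1 _ _ fun hγ => ?_)
      have e1 : ni (α - β) = ni α - ni β := map_sub _ _ _
      have e2 : nj (α - β) = nj α - nj β := map_sub _ _ _
      constructor <;> omega
end

section
/- Let Δ⁺ be the positive roots of a complex simple Lie algebra with highest root μ = Σ m_p α_p, suppose m_i = 2, set H = (2/3)H_i, σ = Ad_{exp 2π√(-1)H}, and Δ⁺_k = {α ∈ Δ⁺ : n_i(α) = k} for k = 0,1,2. Then with H-space H_dist spanned by {U^a_α : α ∈ Δ⁺_1} and V spanned by {U^a_α : α ∈ Δ⁺_2}: [V, V] ⊆ k (the fixed algebra), [H_dist, H_dist]_m ⊆ V, and both V and H_dist are invariant under the bracket with k. Consequently, on the associated naturally reductive 3-symmetric space, ξ_V V = 0 and ξ_H H ⊆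 V, i.e. the nearly Kähler structure has special algebraic torsion. -/
/-- Compact real form decomposition for an inner automorphism
of Type `A₃III`: `H = (2/3)H_i` with `m_i = 2`, so every root has
`n_i ∈ {-2,-1,0,1,2}`.  With `k = h ⊕ span{U^a_α : n_i(α) = 0}`,
`H_dist = span{U^a_α : |n_i(α)| = 1}` and `V = span{U^a_α : |n_i(α)| = 2}`:
`[V,V] ⊆ k`, `[H_dist,H_dist]_m ⊆ V` (i.e. `[H_dist,H_dist] ⊆ V + k`), and
both `V` and `H_dist` are invariant under bracketing with `k`.  Consequently,
since `ξ_X Y = -(1/2)[X,Y]_m` on the associated naturally reductive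
3-symmetric space, `ξ_V V = 0` and `ξ_H H ⊆ V`: the nearly Kähler structure
has special algebraic torsion. -/
theorem stmt17
    {L : Type*} [LieRing L] [LieAlgebra ℝ L]
    {R : Type*} [AddCommGroup R]
    (Δ : Set R) (hsym : ∀ a, a ∈ Δ ↔ -a ∈ Δ)
    (ni : R →+ ℤ)
    (hm : ∀ α ∈ Δ, ni α = 0 ∨ ni α = 1 ∨ ni α = -1 ∨ ni α = 2 ∨ ni α = -2)
    (U : ℕ → R → L) (Hc : Set L)
    (hU0 : ∀ (a : ℕ) (α : R), α ∉ Δ → U a α = 0)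
    (hUper : ∀ (a : ℕ) (α : R), U (a + 2) α = U a α)
    (hUneg0 : ∀ α, U 0 (-α) = -U 0 α)
    (hUneg1 : ∀ α, U 1 (-α) = U 1 α)
    (hbrUU : ∀ (a b : ℕ) (α β : R), α ∈ Δ → β ∈ Δ → α + β ≠ 0 → α ≠ β →
      ⁅U a α, U b β⁆ ∈ Submodule.span ℝ {U (a + b) (α + β), U (a + b) (α - β)})
    (hbrUUsame : ∀ (a b : ℕ) (α : R), ⁅U a α, U b α⁆ ∈ Submodule.span ℝ Hc)
    (hbrH : ∀ h ∈ Hc, ∀ (a : ℕ) (α : R), ⁅h, U a α⁆ ∈ Submodule.span ℝ {U 0 α, U 1 α})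
    (hbrHH : ∀ h ∈ Hc, ∀ h' ∈ Hc, ⁅h, h'⁆ = 0)
    (K Hd V : Submodule ℝ L)
    (hK : K = Submodule.span ℝ
      (Hc ∪ {x | ∃ (a : ℕ) (α : R), α ∈ Δ ∧ ni α = 0 ∧ x = U a α}))
    (hHd : Hd = Submodule.span ℝ
      {x | ∃ (a : ℕ) (α : R), α ∈ Δ ∧ (ni α) ^ 2 = 1 ∧ x = U a α})
    (hV : V = Submodule.span ℝ
      {x | ∃ (a : ℕ) (α : R), α ∈ Δ ∧ (ni α) ^ 2 = 4 ∧ x = U a α}) :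
    -- [V, V] ⊆ k, i.e. ξ_V V = 0
    (∀ x ∈ V, ∀ y ∈ V, ⁅x, y⁆ ∈ K) ∧
    -- [H, H]_m ⊆ V, i.e. ξ_H H ⊆ V
    (∀ x ∈ Hd, ∀ y ∈ Hd, ⁅x, y⁆ ∈ V ⊔ K) ∧
    -- invariance under k
    (∀ x ∈ K, ∀ v ∈ V, ⁅x, v⁆ ∈ V) ∧
    (∀ x ∈ K, ∀ v ∈ Hd, ⁅x, v⁆ ∈ Hd) := by
  subst hK hHd hV
  -- generator sets
  set SK : Set L := Hc ∪ {x | ∃ (a : ℕ) (α : R), α ∈ Δ ∧ ni α = 0 ∧ x = U a α} with hSK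
  set SH : Set L := {x | ∃ (a : ℕ) (α : R), α ∈ Δ ∧ (ni α) ^ 2 = 1 ∧ x = U a α} with hSH
  set SV : Set L := {x | ∃ (a : ℕ) (α : R), α ∈ Δ ∧ (ni α) ^ 2 = 4 ∧ x = U a α} with hSV
  have hKle : Submodule.span ℝ Hc ≤ Submodule.span ℝ SK :=
    Submodule.span_mono Set.subset_union_left
  -- sign under negation
  have hUneg : ∀ (a : ℕ) (α : R), U a (-α) = -U a α ∨ U a (-α) = U a α := by
    intro a
    induction a using Nat.strong_induction_on with
    | _ a ih =>
      match a with
      | 0 => intro α; left; exact hUneg0 α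
      | 1 => intro α; right; exact hUneg1 α
      | (n+2) => intro α; rw [hUper, hUper]; exact ih n (by omega) α
  -- squares over ℤ
  have sqZ : ∀ (x n : ℤ), x ^ 2 = n ^ 2 → x = n ∨ x = -n := by
    intro x n h
    have h2 : (x - n) * (x + n) = 0 := by nlinarith [h]
    rcases mul_eq_zero.mp h2 with h3 | h3
    · left; omega
    · right; omega
  -- membership helpers
  have memU : ∀ (W : Submodule ℝ L) (c : ℕ) (γ : R), (γ ∈ Δ → U c γ ∈ W) → U c γ ∈ W := by
    intro W c γ h
    by_cases hγ : γ ∈ Δ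
    · exact h hγ
    · rw [hU0 c γ hγ]; exact W.zero_mem
  have pairLe : ∀ (W : Submodule ℝ L) (u v x : L), u ∈ W → v ∈ W →
      x ∈ Submodule.span ℝ ({u, v} : Set L) → x ∈ W := by
    intro W u v x hu hv hx
    refine Submodule.span_le.mpr ?_ hx
    rintro y (rfl | rfl) <;> assumption
  have hVmem : ∀ (c : ℕ) (γ : R), γ ∈ Δ → (ni γ) ^ 2 = 4 → U c γ ∈ Submodule.span ℝ SV :=
    fun c γ h1 h2 => Submodule.subset_span ⟨c, γ, h1, h2, rfl⟩
  have hHmem : ∀ (c : ℕ) (γ : R), γ ∈ Δ → (ni γ) ^ 2 = 1 → U c γ ∈ Submodule.span ℝ SH :=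
    fun c γ h1 h2 => Submodule.subset_span ⟨c, γ, h1, h2, rfl⟩
  have hKmem : ∀ (c : ℕ) (γ : R), γ ∈ Δ → ni γ = 0 → U c γ ∈ Submodule.span ℝ SK :=
    fun c γ h1 h2 => Submodule.subset_span (Or.inr ⟨c, γ, h1, h2, rfl⟩)
  -- bilinearity over spans
  have bil : ∀ (S T : Set L) (W : Submodule ℝ L),
      (∀ s ∈ S, ∀ t ∈ T, ⁅s, t⁆ ∈ W) →
      ∀ x ∈ Submodule.span ℝ S, ∀ y ∈ Submodule.span ℝ T, ⁅x, y⁆ ∈ W := by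
    intro S T W h x hx
    refine Submodule.span_induction ?_ ?_ ?_ ?_ hx
    · intro s hs y hy
      refine Submodule.span_induction ?_ ?_ ?_ ?_ hy
      · exact fun t ht => h s hs t ht
      · simp
      · intro y z _ _ hy hz; rw [lie_add]; exact W.add_mem hy hz
      · intro c y _ hy; rw [lie_smul]; exact W.smul_mem c hy
    · intro y hy; simp
    · intro x1 x2 _ _ h1 h2 y hy; rw [add_lie]; exact W.add_mem (h1 y hy) (h2 y hy)
    · intro c x1 _ h1 y hy; rw [smul_lie]; exact W.smul_mem c (h1 y hy)
  -- equal or opposite roots go to span Hc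
  have sameCase : ∀ (W : Submodule ℝ L), Submodule.span ℝ Hc ≤ W →
      ∀ (a b : ℕ) (α β : R), (α = β ∨ α + β = 0) → ⁅U a α, U b β⁆ ∈ W := by
    intro W hW a b α β h
    rcases h with rfl | h0
    · exact hW (hbrUUsame a b α)
    · have hb : β = -α := by
        have : α + β - α = 0 - α := by rw [h0]
        simpa [add_sub_cancel_left] using this
      subst hb
      rcases hUneg b α with h | h
      · rw [h, lie_neg]; exact W.neg_mem (hW (hbrUUsame a b α))
      · rw [h]; exact hW (hbrUUsame a b α)
  refine ⟨?_, ?_, ?_, ?_⟩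
  · -- [V, V] ⊆ K
    refine bil SV SV _ ?_
    rintro s ⟨a, α, hα, hα2, rfl⟩ t ⟨b, β, hβ, hβ2, rfl⟩
    rcases sqZ _ 2 hα2 with ha | ha <;> rcases sqZ _ 2 hβ2 with hb | hb <;>
    · by_cases hcase : α = β ∨ α + β = 0
      · exact sameCase _ hKle a b α β hcase
      · push_neg at hcase
        refine pairLe _ _ _ _ ?_ ?_ (hbrUU a b α β hα hβ hcase.2 hcase.1)
        · refine memU _ _ _ fun hin => hKmem _ _ hin ?_
          have h1 := hm _ hin
          have h2 : ni (α + β) = ni α + ni β := map_add ni α β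
          omega
        · refine memU _ _ _ fun hin => hKmem _ _ hin ?_
          have h1 := hm _ hin
          have h2 : ni (α - β) = ni α - ni β := map_sub ni α β
          omega
  · -- [Hd, Hd] ⊆ V ⊔ K
    refine bil SH SH _ ?_
    rintro s ⟨a, α, hα, hα2, rfl⟩ t ⟨b, β, hβ, hβ2, rfl⟩
    rcases sqZ _ 1 hα2 with ha | ha <;> rcases sqZ _ 1 hβ2 with hb | hb <;>
    · by_cases hcase : α = β ∨ α + β = 0
      · exact sameCase _ (hKle.trans le_sup_right) a b α β hcase
      · push_neg at hcase
        refine pairLe _ _ _ _ ?_ ?_ (hbrUU a b α β hα hβ hcase.2 hcase.1)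
        · refine memU _ _ _ fun hin => ?_
          have h1 := hm _ hin
          have h2 : ni (α + β) = ni α + ni β := map_add ni α β
          rcases h1 with h | h | h | h | h
          · exact Submodule.mem_sup_right (hKmem _ _ hin h)
          · omega
          · omega
          · exact Submodule.mem_sup_left (hVmem _ _ hin (by rw [h]; norm_num))
          · exact Submodule.mem_sup_left (hVmem _ _ hin (by rw [h]; norm_num))
        · refine memU _ _ _ fun hin => ?_
          have h1 := hm _ hin
          have h2 : ni (α - β) = ni α - ni β := map_sub ni α β
          rcases h1 with h | h | h | h | h
          · exact Submodule.mem_sup_right (hKmem _ _ hin h)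
          · omega
          · omega
          · exact Submodule.mem_sup_left (hVmem _ _ hin (by rw [h]; norm_num))
          · exact Submodule.mem_sup_left (hVmem _ _ hin (by rw [h]; norm_num))
  · -- [K, V] ⊆ V
    refine bil SK SV _ ?_
    rintro s (hs | ⟨a, α, hα, hα0, rfl⟩) t ⟨b, β, hβ, hβ2, rfl⟩
    · exact pairLe _ _ _ _ (hVmem 0 β hβ hβ2) (hVmem 1 β hβ hβ2) (hbrH s hs b β)
    · rcases sqZ _ 2 hβ2 with hb | hb <;>
      · have hne : α ≠ β := fun h => by rw [h, hb] at hα0; omega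
        have h0 : α + β ≠ 0 := by
          intro h
          have : β = -α := by
            have : α + β - α = 0 - α := by rw [h]
            simpa [add_sub_cancel_left] using this
          rw [this, map_neg, hα0] at hb; omega
        refine pairLe _ _ _ _ ?_ ?_ (hbrUU a b α β hα hβ h0 hne)
        · refine memU _ _ _ fun hin => hVmem _ _ hin ?_
          have h2 : ni (α + β) = ni α + ni β := map_add ni α β
          rw [h2, hα0, hb]; norm_num
        · refine memU _ _ _ fun hin => hVmem _ _ hin ?_
          have h2 : ni (α - β) = ni α - ni β := map_sub ni α β
          rw [h2, hα0, hb]; norm_num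
  · -- [K, Hd] ⊆ Hd
    refine bil SK SH _ ?_
    rintro s (hs | ⟨a, α, hα, hα0, rfl⟩) t ⟨b, β, hβ, hβ2, rfl⟩
    · exact pairLe _ _ _ _ (hHmem 0 β hβ hβ2) (hHmem 1 β hβ hβ2) (hbrH s hs b β)
    · rcases sqZ _ 1 hβ2 with hb | hb <;>
      · have hne : α ≠ β := fun h => by rw [h, hb] at hα0; omega
        have h0 : α + β ≠ 0 := by
          intro h
          have : β = -α := by
            have : α + β - α = 0 - α := by rw [h]
            simpa [add_sub_cancel_left] using this
          rw [this, map_neg, hα0] at hb; omega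
        refine pairLe _ _ _ _ ?_ ?_ (hbrUU a b α β hα hβ h0 hne)
        · refine memU _ _ _ fun hin => hHmem _ _ hin ?_
          have h2 : ni (α + β) = ni α + ni β := map_add ni α β
          rw [h2, hα0, hb]; norm_num
        · refine memU _ _ _ fun hin => hHmem _ _ hin ?_
          have h2 : ni (α - β) = ni α - ni β := map_sub ni α β
          rw [h2, hα0, hb]; norm_num
end
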